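/- Let G be a finite simple graph on n vertices. Then γ^t_gr(B_L(G)) = 2 γ^L_gr(G) and Z_−(B_L(G)) = n + 2 Z_L(G). -/

import Mathlib

/-!
For symmetric relations `R`, `P`, let `x → y` be a valid force when `y ∈ R(x)` and
`P(x) ∖ {y}` is blue. A forcing process `a_1 → b_1, …, a_k → b_k` is then the same thing as
the sequence `b_k, …, b_1` with footprints `a_k, …, a_1`: `a_i ∈ R(b_i)` and `a_i ∉ P(b_j)`
for `j > i`. So zero forcing sets are the complements of Grundy sequences for `(R, P)`, which
gives `Z_−(H) = |V(H)| − γ^t_gr(H)` and `Z_L(G) = n − γ^L_gr(G)`; the second identity then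
follows from the first, as `|V(B_L(G))| = 3n`.

In a total dominating sequence of `B_L(G)` the `x`-vertices form an L-sequence of `G` (a
footprint `y_m` or `z_m` of `x_c` records `m ∈ N[c]`), and so do the footprints of the
`y`/`z`-vertices read backwards; so `γ^t_gr(B_L(G)) ≤ 2 γ^L_gr(G)`. Conversely an
L-sequence `c` of `G` gives the total dominating sequence `x_{c_1}, …, x_{c_k}` followed by
the footprints of these vertices in reverse order.
-/

namespace ZFGrundy

variable {V : Type*}

/-- `u` is a member of the closed neighborhood `N[x]` of `x` in `G`. -/
def ClosedNbr (G : SimpleGraph V) (x u : V) : Prop := u = x ∨ G.Adj x u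

/-- CCR-Z: the force `x → y` is valid w.r.t. blue set `S` if `y ∉ S`, `y ∈ N(x)`,
and `N[x] \ {y} ⊆ S`. -/
def ZForce (G : SimpleGraph V) (S : Set V) (x y : V) : Prop :=
  y ∉ S ∧ G.Adj x y ∧ ∀ u, ClosedNbr G x u → u ≠ y → u ∈ S

/-- CCR-Z_ℓ̇: the force `x → y` is valid w.r.t. blue set `S` if `y ∉ S`, `y ∈ N[x]`,
and `N[x] \ {y} ⊆ S`. -/
def ZelldForce (G : SimpleGraph V) (S : Set V) (x y : V) : Prop :=
  y ∉ S ∧ ClosedNbr G x y ∧ ∀ u, ClosedNbr G x u → u ≠ y → u ∈ S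

/-- CCR-Z_−: the force `x → y` is valid w.r.t. blue set `S` if `y ∉ S`, `y ∈ N(x)`,
and `N(x) \ {y} ⊆ S`. -/
def ZminusForce (G : SimpleGraph V) (S : Set V) (x y : V) : Prop :=
  y ∉ S ∧ G.Adj x y ∧ ∀ u, G.Adj x u → u ≠ y → u ∈ S

/-- CCR-Z_L: either `x ≠ y` and the force is valid under CCR-Z_−, or `x = y` and the
force is valid under CCR-Z_ℓ̇. -/
def ZLForce (G : SimpleGraph V) (S : Set V) (x y : V) : Prop :=
  (x ≠ y ∧ ZminusForce G S x y) ∨ (x = y ∧ ZelldForce G S x y)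

/-- `B` is a zero forcing set of `G` with respect to the color change rule `force`:
there is an ordering `b 0, …, b (k-1)` of the vertices outside `B` and vertices
`a 0, …, a (k-1)` such that each force `a i → b i` is valid w.r.t. the blue set
consisting of all vertices other than `b i, b (i+1), …, b (k-1)`. -/
def IsZFS (G : SimpleGraph V) (force : SimpleGraph V → Set V → V → V → Prop)
    (B : Finset V) : Prop :=
  ∃ (k : ℕ) (b a : Fin k → V), Function.Injective b ∧
    (∀ v : V, v ∉ B ↔ ∃ i, b i = v) ∧
    ∀ i : Fin k, force G {v | ∀ j : Fin k, i ≤ j → v ≠ b j} (a i) (b i)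

/-- The zero forcing number with respect to the color change rule `force`. -/
noncomputable def zfNum (G : SimpleGraph V)
    (force : SimpleGraph V → Set V → V → V → Prop) : ℕ :=
  sInf {m : ℕ | ∃ B : Finset V, IsZFS G force B ∧ B.card = m}

/-- A Z-sequence: distinct vertices with `N(v i) \ ⋃_{j<i} N[v j] ≠ ∅`. -/
def IsZSeq (G : SimpleGraph V) {k : ℕ} (v : Fin k → V) : Prop :=
  Function.Injective v ∧
  ∀ i, ∃ u, G.Adj (v i) u ∧ ∀ j, j < i → ¬ ClosedNbr G (v j) u

/-- A dominating sequence: distinct vertices with `N[v i] \ ⋃_{j<i} N[v j] ≠ ∅`. -/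
def IsDomSeq (G : SimpleGraph V) {k : ℕ} (v : Fin k → V) : Prop :=
  Function.Injective v ∧
  ∀ i, ∃ u, ClosedNbr G (v i) u ∧ ∀ j, j < i → ¬ ClosedNbr G (v j) u

/-- A total dominating sequence: distinct vertices with `N(v i) \ ⋃_{j<i} N(v j) ≠ ∅`. -/
def IsTotDomSeq (G : SimpleGraph V) {k : ℕ} (v : Fin k → V) : Prop :=
  Function.Injective v ∧
  ∀ i, ∃ u, G.Adj (v i) u ∧ ∀ j, j < i → ¬ G.Adj (v j) u

/-- An L-sequence: distinct vertices with `N[v i] \ ⋃_{j<i} N(v j) ≠ ∅`. -/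
def IsLSeq (G : SimpleGraph V) {k : ℕ} (v : Fin k → V) : Prop :=
  Function.Injective v ∧
  ∀ i, ∃ u, ClosedNbr G (v i) u ∧ ∀ j, j < i → ¬ G.Adj (v j) u

/-- The Z-Grundy domination number: the largest length of a Z-sequence. -/
noncomputable def grundyZ (G : SimpleGraph V) : ℕ :=
  sSup {k : ℕ | ∃ v : Fin k → V, IsZSeq G v}

/-- The Grundy domination number: the largest length of a dominating sequence. -/
noncomputable def grundyDom (G : SimpleGraph V) : ℕ :=
  sSup {k : ℕ | ∃ v : Fin k → V, IsDomSeq G v}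

/-- The Grundy total domination number: the largest length of a total dominating
sequence. -/
noncomputable def grundyTot (G : SimpleGraph V) : ℕ :=
  sSup {k : ℕ | ∃ v : Fin k → V, IsTotDomSeq G v}

/-- The L-Grundy domination number: the largest length of an L-sequence. -/
noncomputable def grundyL (G : SimpleGraph V) : ℕ :=
  sSup {k : ℕ | ∃ v : Fin k → V, IsLSeq G v}

/-- The largest length of a total dominating sequence using only vertices of `X`. -/
noncomputable def grundyTotOn (G : SimpleGraph V) (X : Set V) : ℕ :=
  sSup {k : ℕ | ∃ v : Fin k → V, IsTotDomSeq G v ∧ ∀ i, v i ∈ X}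

/-- The domination number: minimum size of a set `X` such that every vertex outside
`X` has a neighbor in `X`. -/
noncomputable def domNum (G : SimpleGraph V) : ℕ :=
  sInf {m : ℕ | ∃ X : Finset V, (∀ v, v ∉ X → ∃ u ∈ X, G.Adj v u) ∧ X.card = m}

/-- The vertex cover number: minimum size of a set of vertices meeting every edge. -/
noncomputable def vcNum (G : SimpleGraph V) : ℕ :=
  sInf {m : ℕ | ∃ C : Finset V, (∀ u w, G.Adj u w → u ∈ C ∨ w ∈ C) ∧ C.card = m}

/-- The family `S(G)` of real symmetric matrices whose off-diagonal entry `A i j`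
is nonzero exactly when `i` and `j` are adjacent in `G`. -/
def SFam (G : SimpleGraph V) : Set (Matrix V V ℝ) :=
  {A | A.IsSymm ∧ ∀ i j : V, i ≠ j → (A i j ≠ 0 ↔ G.Adj i j)}

/-- The family `S_ℓ̇(G)`: matrices in `S(G)` with all diagonal entries nonzero. -/
def SldFam (G : SimpleGraph V) : Set (Matrix V V ℝ) :=
  {A | A ∈ SFam G ∧ ∀ i : V, A i i ≠ 0}

/-- The family `S_0(G)`: matrices in `S(G)` with all diagonal entries zero. -/
def S0Fam (G : SimpleGraph V) : Set (Matrix V V ℝ) :=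
  {A | A ∈ SFam G ∧ ∀ i : V, A i i = 0}

/-- The bipartite graph `B_L(G)` on `{x_i} ∪ {y_i} ∪ {z_i}` (encoded as
`Sum.inl i`, `Sum.inr (Sum.inl i)`, `Sum.inr (Sum.inr i)`), with edges `{x i, y j}`
and `{x i, z j}` for every edge `{i, j}` of `G`, together with edges `{x i, y i}`
for every vertex `i`. -/
def BL (G : SimpleGraph V) : SimpleGraph (V ⊕ V ⊕ V) :=
  SimpleGraph.fromRel fun p q =>
    match p, q with
    | Sum.inl i, Sum.inr (Sum.inl j) => G.Adj i j ∨ i = j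
    | Sum.inl i, Sum.inr (Sum.inr j) => G.Adj i j
    | _, _ => False

section GrundyDuality

variable (R P : V → V → Prop)

/- Footprint rules `(R, P)`: `IsTotDomSeq H` and `ZminusForce H` are, by definition,
`IsGrundySeq` and `IsForce` for `R = P = H.Adj`, and `IsLSeq G` is `IsGrundySeq` for
`R = ClosedNbr G`, `P = G.Adj`. -/

def IsGrundySeq {k : ℕ} (v : Fin k → V) : Prop :=
  Function.Injective v ∧ ∀ i, ∃ u, R (v i) u ∧ ∀ j, j < i → ¬ P (v j) u

noncomputable def grundyNum : ℕ :=
  sSup {k : ℕ | ∃ v : Fin k → V, IsGrundySeq R P v}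

def IsForce (S : Set V) (x y : V) : Prop :=
  y ∉ S ∧ R x y ∧ ∀ u, P x u → u ≠ y → u ∈ S

variable {R P}

lemma IsGrundySeq.length_le_card [Fintype V] {k : ℕ} {v : Fin k → V}
    (h : IsGrundySeq R P v) : k ≤ Fintype.card V := by
  simpa using Fintype.card_le_of_injective v h.1

lemma bddAbove_grundySeq_lengths [Fintype V] :
    BddAbove {k : ℕ | ∃ v : Fin k → V, IsGrundySeq R P v} :=
  ⟨Fintype.card V, by rintro _ ⟨_, hv⟩; exact hv.length_le_card⟩

lemma IsGrundySeq.length_le_grundyNum [Fintype V] {k : ℕ} {v : Fin k → V}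
    (h : IsGrundySeq R P v) : k ≤ grundyNum R P :=
  le_csSup bddAbove_grundySeq_lengths ⟨v, h⟩

lemma exists_isGrundySeq_grundyNum [Fintype V] :
    ∃ v : Fin (grundyNum R P) → V, IsGrundySeq R P v :=
  Nat.sSup_mem (s := {k | ∃ v : Fin k → V, IsGrundySeq R P v})
    ⟨0, Fin.elim0, fun i => i.elim0, fun i => i.elim0⟩ bddAbove_grundySeq_lengths

lemma zfNum_le {G : SimpleGraph V} {force : SimpleGraph V → Set V → V → V → Prop}
    {B : Finset V} (h : IsZFS G force B) : zfNum G force ≤ B.card :=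
  Nat.sInf_le ⟨B, h, rfl⟩

lemma isForce_iff_footprints (hR : Std.Symm R) (hP : Std.Symm P) {k : ℕ}
    {b a : Fin k → V} (hb : Function.Injective b) :
    (∀ i, IsForce R P {v | ∀ j, i ≤ j → v ≠ b j} (a i) (b i)) ↔
      ∀ i, R (b i) (a i) ∧ ∀ j, i < j → ¬ P (b j) (a i) := by
  refine forall_congr' fun i =>
    ⟨fun ⟨_, hab, hblue⟩ => ⟨hR.symm _ _ hab, fun j hij hba => ?_⟩,
      fun ⟨hba, hlater⟩ => ⟨fun h => h i le_rfl rfl, hR.symm _ _ hba, ?_⟩⟩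
  · exact hblue (b j) (hP.symm _ _ hba) (hb.ne hij.ne') j hij.le rfl
  · rintro _ hau hne j hij rfl
    exact hlater j (hij.lt_of_ne fun h => hne (h ▸ rfl)) (hP.symm _ _ hau)

section
variable [Fintype V] {G : SimpleGraph V} {force : SimpleGraph V → Set V → V → V → Prop}

lemma exists_isZFS_of_isGrundySeq (hforce : ∀ S x y, force G S x y ↔ IsForce R P S x y)
    (hR : Std.Symm R) (hP : Std.Symm P) {k : ℕ} {v : Fin k → V} (hv : IsGrundySeq R P v) :
    ∃ B : Finset V, IsZFS G force B ∧ B.card + k = Fintype.card V := by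
  classical
  obtain ⟨hinj, hfoot⟩ := hv
  choose u hu using hfoot
  have hb : Function.Injective (v ∘ Fin.rev) := hinj.comp Fin.rev_injective
  refine ⟨(Finset.univ.image v)ᶜ,
    ⟨k, v ∘ Fin.rev, u ∘ Fin.rev, hb, fun w => ?_, ?_⟩, ?_⟩
  · simpa using Fin.rev_surjective.exists (p := fun i => v i = w)
  · simp_rw [hforce]
    refine (isForce_iff_footprints hR hP hb).2 fun i => ⟨(hu _).1, fun j hij => ?_⟩
    exact (hu _).2 _ (Fin.rev_lt_rev.2 hij)
  · rw [Finset.card_compl, Finset.card_image_of_injective _ hinj, Finset.card_univ,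
      Fintype.card_fin, Nat.sub_add_cancel]
    simpa using Fintype.card_le_of_injective v hinj

lemma IsZFS.exists_isGrundySeq (hforce : ∀ S x y, force G S x y ↔ IsForce R P S x y)
    (hR : Std.Symm R) (hP : Std.Symm P) {B : Finset V} (hB : IsZFS G force B) :
    ∃ (k : ℕ) (v : Fin k → V), IsGrundySeq R P v ∧ B.card + k = Fintype.card V := by
  classical
  obtain ⟨k, b, a, hb, hcompl, hforces⟩ := hB
  simp_rw [hforce] at hforces
  rw [isForce_iff_footprints hR hP hb] at hforces
  refine ⟨k, b ∘ Fin.rev, ⟨hb.comp Fin.rev_injective, fun i => ⟨a i.rev, (hforces _).1,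
    fun j hji => (hforces _).2 _ (Fin.rev_lt_rev.2 hji)⟩⟩, ?_⟩
  have himage : Finset.univ.image b = Bᶜ := by
    ext w
    simpa using (hcompl w).symm
  rw [← Finset.card_compl_add_card B, add_comm, ← himage,
    Finset.card_image_of_injective _ hb, Finset.card_univ, Fintype.card_fin]

theorem zfNum_add_grundyNum (hforce : ∀ S x y, force G S x y ↔ IsForce R P S x y)
    (hR : Std.Symm R) (hP : Std.Symm P) :
    zfNum G force + grundyNum R P = Fintype.card V := by
  obtain ⟨v, hv⟩ := exists_isGrundySeq_grundyNum (R := R) (P := P)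
  obtain ⟨B, hB, hcard⟩ := exists_isZFS_of_isGrundySeq hforce hR hP hv
  have hne : {m | ∃ B : Finset V, IsZFS G force B ∧ B.card = m}.Nonempty := ⟨_, B, hB, rfl⟩
  obtain ⟨B₀, hB₀, hB₀card⟩ : zfNum G force ∈ _ := Nat.sInf_mem hne
  obtain ⟨k, w, hw, hkcard⟩ := hB₀.exists_isGrundySeq hforce hR hP
  have := zfNum_le hB
  have := hw.length_le_grundyNum
  omega

end

end GrundyDuality

lemma closedNbr_symm (G : SimpleGraph V) : Std.Symm (ClosedNbr G) where
  symm _ _ := Or.imp Eq.symm SimpleGraph.Adj.symm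

lemma zLForce_iff {G : SimpleGraph V} {S : Set V} {x y : V} :
    ZLForce G S x y ↔ IsForce (ClosedNbr G) G.Adj S x y := by
  constructor
  · rintro (⟨-, hy, hxy, hblue⟩ | ⟨rfl, hy, -, hblue⟩)
    exacts [⟨hy, Or.inr hxy, hblue⟩, ⟨hy, Or.inl rfl, fun u hu => hblue u (Or.inr hu)⟩]
  · rintro ⟨hy, hxy, hblue⟩
    by_cases hne : x = y
    · subst hne
      refine Or.inr ⟨rfl, hy, Or.inl rfl, fun u hu hux => ?_⟩
      exact hblue u (hu.resolve_left hux) hux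
    · exact Or.inl ⟨hne, hy, hxy.resolve_left (Ne.symm hne), hblue⟩

lemma zfNum_zminusForce_add_grundyTot [Fintype V] (H : SimpleGraph V) :
    zfNum H ZminusForce + grundyTot H = Fintype.card V :=
  zfNum_add_grundyNum (fun _ _ _ => Iff.rfl) H.symm H.symm

lemma zfNum_zLForce_add_grundyL [Fintype V] (G : SimpleGraph V) :
    zfNum G ZLForce + grundyL G = Fintype.card V :=
  zfNum_add_grundyNum (fun _ _ _ => zLForce_iff) (closedNbr_symm G) G.symm

section TotDomSeq

variable {H : SimpleGraph V} {k m : ℕ} {v : Fin k → V}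

lemma IsTotDomSeq.comp_strictMono (h : IsTotDomSeq H v) {f : Fin m → Fin k}
    (hf : StrictMono f) : IsTotDomSeq H (v ∘ f) :=
  ⟨h.1.comp hf.injective, fun i =>
    let ⟨u, hu, hprev⟩ := h.2 (f i)
    ⟨u, hu, fun _ hj => hprev _ (hf hj)⟩⟩

-- The footprint of `u (rev i)` in the dual sequence is `v (rev i)`.
lemma IsTotDomSeq.exists_dual (h : IsTotDomSeq H v) :
    ∃ u : Fin k → V, (∀ i, H.Adj (v i) (u i)) ∧ IsTotDomSeq H (u ∘ Fin.rev) := by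
  choose u hu hprev using h.2
  have hinj : Function.Injective u := by
    intro i j hij
    by_contra hne
    rcases lt_or_gt_of_ne hne with hlt | hlt
    · exact hprev j i hlt (hij ▸ hu i)
    · exact hprev i j hlt (hij ▸ hu j)
  refine ⟨u, hu, hinj.comp Fin.rev_injective,
    fun i => ⟨v i.rev, (hu _).symm, fun j hji => ?_⟩⟩
  exact fun hadj => hprev _ _ (Fin.rev_lt_rev.2 hji) hadj.symm

lemma IsTotDomSeq.append {v' : Fin m → V} (hv : IsTotDomSeq H v) (hv' : IsTotDomSeq H v')
    (hdisj : ∀ i j, v i ≠ v' j) (hsep : ∀ i j q, H.Adj (v' j) q → ¬ H.Adj (v i) q) :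
    IsTotDomSeq H (Fin.append v v') := by
  refine ⟨Fin.append_injective_iff.2 ⟨hv.1, hv'.1, hdisj⟩, fun i => ?_⟩
  induction i using Fin.addCases with
  | left i =>
    obtain ⟨u, hu, hprev⟩ := hv.2 i
    refine ⟨u, by rwa [Fin.append_left], fun j hji => ?_⟩
    induction j using Fin.addCases with
    | left j => simpa using hprev j ((Fin.strictMono_castAdd m).lt_iff_lt.1 hji)
    | right j =>
      simp only [Fin.lt_def, Fin.val_castAdd, Fin.val_natAdd] at hji
      omega
  | right i =>
    obtain ⟨u, hu, hprev⟩ := hv'.2 i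
    refine ⟨u, by rwa [Fin.append_right], fun j hji => ?_⟩
    induction j using Fin.addCases with
    | left j => simpa using hsep j i u hu
    | right j => simpa using hprev j ((Fin.natAdd_lt_natAdd_iff k).1 hji)

end TotDomSeq

section BipartiteLift

open Sum

variable {G : SimpleGraph V}

lemma BL_adj_inl_inl {i j : V} : ¬ (BL G).Adj (inl i) (inl j) := by
  simp [BL, SimpleGraph.fromRel_adj]

lemma BL_adj_inr_inr {p q : V ⊕ V} : ¬ (BL G).Adj (inr p) (inr q) := by
  cases p <;> cases q <;> simp [BL, SimpleGraph.fromRel_adj]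

lemma BL_adj_inl_inr_inl {i j : V} : (BL G).Adj (inl i) (inr (inl j)) ↔ G.Adj i j ∨ i = j := by
  simp [BL, SimpleGraph.fromRel_adj]

lemma BL_adj_inl_inr_inr {i j : V} : (BL G).Adj (inl i) (inr (inr j)) ↔ G.Adj i j := by
  simp [BL, SimpleGraph.fromRel_adj]

lemma exists_inr_of_BL_adj_inl {c : V} {q : V ⊕ V ⊕ V} (h : (BL G).Adj (inl c) q) :
    ∃ p, q = inr p := by
  rcases q with c' | p
  exacts [absurd h BL_adj_inl_inl, ⟨p, rfl⟩]

lemma exists_inl_of_BL_adj_inr {p : V ⊕ V} {q : V ⊕ V ⊕ V} (h : (BL G).Adj (inr p) q) :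
    ∃ c, q = inl c := by
  rcases q with c | p'
  exacts [⟨c, rfl⟩, absurd h BL_adj_inr_inr]

lemma closedNbr_of_BL_adj {c : V} {p : V ⊕ V} (h : (BL G).Adj (inl c) (inr p)) :
    ClosedNbr G c (p.elim id id) := by
  rcases p with m | m
  · exact (BL_adj_inl_inr_inl.1 h).symm.imp Eq.symm id
  · exact Or.inr (BL_adj_inl_inr_inr.1 h)

lemma BL_adj_of_adj {c : V} {p : V ⊕ V} (h : G.Adj c (p.elim id id)) :
    (BL G).Adj (inl c) (inr p) := by
  rcases p with m | m
  exacts [BL_adj_inl_inr_inl.2 (Or.inl h), BL_adj_inl_inr_inr.2 h]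

lemma exists_BL_footprint {c m : V} (h : ClosedNbr G c m) :
    ∃ q, (BL G).Adj (inl c) q ∧ ∀ c', (BL G).Adj (inl c') q → c' = c ∨ G.Adj c' m := by
  rcases h with rfl | h
  · exact ⟨inr (inl m), BL_adj_inl_inr_inl.2 (Or.inr rfl),
      fun c' h' => (BL_adj_inl_inr_inl.1 h').symm⟩
  · exact ⟨inr (inr m), BL_adj_inl_inr_inr.2 h, fun c' h' => Or.inr (BL_adj_inl_inr_inr.1 h')⟩

lemma isTotDomSeq_BL_inl_iff {k : ℕ} {c : Fin k → V} :
    IsTotDomSeq (BL G) (inl ∘ c) ↔ IsLSeq G c := by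
  refine ⟨fun ⟨hinj, hfoot⟩ => ⟨hinj.of_comp, fun i => ?_⟩,
    fun ⟨hinj, hfoot⟩ => ⟨inl_injective.comp hinj, fun i => ?_⟩⟩
  · obtain ⟨q, hq, hprev⟩ := hfoot i
    obtain ⟨p, rfl⟩ := exists_inr_of_BL_adj_inl hq
    exact ⟨p.elim id id, closedNbr_of_BL_adj hq,
      fun j hji hadj => hprev j hji (BL_adj_of_adj hadj)⟩
  · obtain ⟨m, hm, hprev⟩ := hfoot i
    obtain ⟨q, hq, hsees⟩ := exists_BL_footprint hm
    refine ⟨q, hq, fun j hji hadj => ?_⟩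
    rcases hsees _ hadj with heq | hadj'
    exacts [hji.ne (hinj heq), hprev j hji hadj']

variable [Fintype V] {k : ℕ} {w : Fin k → V ⊕ V ⊕ V}

lemma length_le_grundyL_of_inl (h : IsTotDomSeq (BL G) w) (hw : ∀ i, ∃ c, w i = inl c) :
    k ≤ grundyL G := by
  choose c hc using hw
  rw [show w = inl ∘ c from funext hc, isTotDomSeq_BL_inl_iff] at h
  exact IsGrundySeq.length_le_grundyNum h

lemma length_le_grundyL_of_inr (h : IsTotDomSeq (BL G) w) (hw : ∀ i, ∃ p, w i = inr p) :
    k ≤ grundyL G := by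
  obtain ⟨u, hu, hdual⟩ := h.exists_dual
  refine length_le_grundyL_of_inl hdual fun i => ?_
  obtain ⟨p, hp⟩ := hw i.rev
  exact exists_inl_of_BL_adj_inr (hp ▸ hu i.rev)

lemma grundyTot_BL_le : grundyTot (BL G) ≤ 2 * grundyL G := by
  classical
  obtain ⟨w, hw⟩ : ∃ w : Fin (grundyTot (BL G)) → V ⊕ V ⊕ V, IsTotDomSeq (BL G) w :=
    exists_isGrundySeq_grundyNum
  set T := Finset.univ.filter fun i => (w i).isLeft
  have hx := length_le_grundyL_of_inl (hw.comp_strictMono (T.orderEmbOfFin rfl).strictMono)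
    fun i => isLeft_iff.1 (Finset.mem_filter.1 (T.orderEmbOfFin_mem rfl i)).2
  have hyz := length_le_grundyL_of_inr (hw.comp_strictMono (Tᶜ.orderEmbOfFin rfl).strictMono)
    fun i => isRight_iff.1 <| not_isLeft.1 fun hi => Finset.mem_compl.1
      (Tᶜ.orderEmbOfFin_mem rfl i) (Finset.mem_filter.2 ⟨Finset.mem_univ _, hi⟩)
  have hsplit := T.card_add_card_compl
  rw [Fintype.card_fin] at hsplit
  omega

lemma two_mul_grundyL_le_grundyTot_BL : 2 * grundyL G ≤ grundyTot (BL G) := by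
  obtain ⟨c, hc⟩ : ∃ c : Fin (grundyL G) → V, IsLSeq G c := exists_isGrundySeq_grundyNum
  have hx : IsTotDomSeq (BL G) (inl ∘ c) := isTotDomSeq_BL_inl_iff.2 hc
  obtain ⟨u, hu, hdual⟩ := hx.exists_dual
  have hyz i : ∃ p, u i = inr p := exists_inr_of_BL_adj_inl (hu i)
  have happ := hx.append hdual (fun i j => ?_) fun i j q hadj => ?_
  · rw [two_mul]
    exact IsGrundySeq.length_le_grundyNum happ
  · obtain ⟨p, hp⟩ := hyz j.rev
    simp [hp]
  · obtain ⟨p, hp⟩ := hyz j.rev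
    rw [Function.comp_apply, hp] at hadj
    obtain ⟨c', rfl⟩ := exists_inl_of_BL_adj_inr hadj
    exact BL_adj_inl_inl

end BipartiteLift

/-- `γ^t_gr(B_L(G)) = 2 γ^L_gr(G)` and `Z_−(B_L(G)) = n + 2 Z_L(G)`
for every finite simple graph `G` on `n` vertices. -/
theorem statement_17 {V : Type*} [Fintype V] (G : SimpleGraph V) :
    grundyTot (BL G) = 2 * grundyL G ∧
    zfNum (BL G) ZminusForce = Fintype.card V + 2 * zfNum G ZLForce := by
  have hgrundy : grundyTot (BL G) = 2 * grundyL G :=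
    grundyTot_BL_le.antisymm two_mul_grundyL_le_grundyTot_BL
  refine ⟨hgrundy, ?_⟩
  have hBL := zfNum_zminusForce_add_grundyTot (BL G)
  have hG := zfNum_zLForce_add_grundyL G
  rw [Fintype.card_sum, Fintype.card_sum, hgrundy] at hBL
  omega

end ZFGrundy
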